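/- arXiv:1812.09305 — 4 statements merged into one kernel-verified Lean document; each statement's English description precedes it below -/
import Mathlib

section
/- For every n ≥ 1, there exists a connected graph G on n vertices, not isomorphic to the triangle K₃, such that every cycle isolating set of G has size at least ⌊n/4⌋ and some cycle isolating set of G has size exactly ⌊n/4⌋; that is, ι_c(G) = ⌊n/4⌋. -/
/-!
Chain `n / 4` paws (a triangle with a pendant vertex) by joining their pendants into a path, and
hang the remaining `n % 4` vertices off the end. The closed neighbourhood of each triangle stays
inside its own block of four vertices, so a cycle isolating set meets every block. Conversely the
`n / 4` triangle vertices carrying the pendants dominate all complete blocks, and what is left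
induces a path.
-/

open SimpleGraph

/-- The closed neighbourhood `N[D]` of a set `D` of vertices of `G`. -/
def closedNbhd {V : Type*} (G : SimpleGraph V) (D : Set V) : Set V :=
  D ∪ ⋃ u ∈ D, G.neighborSet u

/-- `D` is a cycle isolating set of `G`: `G − N[D]` contains no cycle. -/
def IsCycleIsolating {V : Type*} (G : SimpleGraph V) (D : Set V) : Prop :=
  (G.induce (closedNbhd G D)ᶜ).IsAcyclic

/-- `ι_c(G)`: the size of a smallest cycle isolating set of `G`. -/
noncomputable def iotaC {V : Type*} (G : SimpleGraph V) : ℕ :=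
  sInf {k | ∃ D : Set V, IsCycleIsolating G D ∧ D.ncard = k}

namespace SimpleGraph

-- A walk from below `a` to above `b` must cross the covering edge `a ⋖ b`: every edge is a bridge.
theorem isAcyclic_hasse {α : Type*} [LinearOrder α] : (hasse α).IsAcyclic := by
  have mem_edges : ∀ {a b : α}, a ⋖ b → ∀ {x y : α} (p : (hasse α).Walk x y), x ≤ a → b ≤ y →
      s(a, b) ∈ p.edges := by
    intro a b hab x y p
    induction p with
    | nil => exact fun hx hy => absurd (hx.trans_lt hab.lt) (not_lt.mpr hy)
    | @cons x x' y hxx' q ih =>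
      intro hx hy
      rw [Walk.edges_cons]
      by_cases hx' : x' ≤ a
      · exact List.mem_cons_of_mem _ (ih hx' hy)
      rw [not_le] at hx'
      rcases hasse_adj.mp hxx' with hc | hc
      · obtain rfl : x = a := hx.eq_of_not_lt fun hxa => hc.2 hxa hx'
        obtain rfl : x' = b := hc.unique_right hab
        exact List.mem_cons_self
      · exact absurd (hc.lt.trans_le hx) (not_lt.mpr hx'.le)
  refine isAcyclic_iff_forall_isBridge.mpr fun e he => ?_
  induction e with | h a b
  rcases hasse_adj.mp he with hab | hba
  · exact isBridge_iff_forall_walk_mem_edges.mpr fun p => mem_edges hab p le_rfl le_rfl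
  · rw [Sym2.eq_swap]
    exact isBridge_iff_forall_walk_mem_edges.mpr fun p => mem_edges hba p le_rfl le_rfl

theorem connected_of_forall_exists_lt_adj {α : Type*} [LinearOrder α] [WellFoundedLT α]
    {G : SimpleGraph α} (a : α) (h : ∀ v, v ≠ a → ∃ u < v, G.Adj u v) : G.Connected := by
  have reach : ∀ v, G.Reachable a v := fun v => by
    induction v using WellFoundedLT.induction with
    | _ v ih =>
      by_cases hv : v = a
      · exact hv ▸ Reachable.refl v
      obtain ⟨u, huv, hadj⟩ := h v hv
      exact (ih u huv).trans hadj.reachable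
  exact (connected_iff_exists_forall_reachable G).mpr ⟨a, reach⟩

end SimpleGraph

section CycleIsolating

variable {V : Type*} {G : SimpleGraph V} {D : Set V}

theorem mem_closedNbhd_iff {v : V} : v ∈ closedNbhd G D ↔ ∃ d ∈ D, d = v ∨ G.Adj d v := by
  simp only [closedNbhd, Set.mem_union, Set.mem_iUnion, mem_neighborSet, exists_prop]
  constructor
  · rintro (hv | ⟨d, hd, hdv⟩)
    exacts [⟨v, hv, Or.inl rfl⟩, ⟨d, hd, Or.inr hdv⟩]
  · rintro ⟨d, hd, rfl | hdv⟩
    exacts [Or.inl hd, Or.inr ⟨d, hd, hdv⟩]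

theorem IsCycleIsolating.exists_mem_closedNbhd_of_adj (hD : IsCycleIsolating G D) {x y z : V}
    (hxy : G.Adj x y) (hxz : G.Adj x z) (hyz : G.Adj y z) :
    x ∈ closedNbhd G D ∨ y ∈ closedNbhd G D ∨ z ∈ closedNbhd G D := by
  classical
  by_contra! ⟨hx, hy, hz⟩
  have triangle : (G.induce (closedNbhd G D)ᶜ).IsNClique 3 {⟨x, hx⟩, ⟨y, hy⟩, ⟨z, hz⟩} :=
    is3Clique_triple_iff.mpr ⟨hxy, hxz, hyz⟩
  exact hD.cliqueFree le_rfl _ triangle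

theorem iotaC_eq_of_forall_le_ncard {m : ℕ} (hle : ∀ D, IsCycleIsolating G D → m ≤ D.ncard)
    (hD : IsCycleIsolating G D) (hcard : D.ncard = m) : iotaC G = m :=
  le_antisymm (Nat.sInf_le ⟨D, hD, hcard⟩)
    (le_csInf ⟨m, D, hD, hcard⟩ fun _ ⟨D', hD', hcard'⟩ => hcard' ▸ hle D' hD')

end CycleIsolating

/-- Vertex `4 * i` is a pendant attached to the triangle `4 * i + 1, 4 * i + 2, 4 * i + 3`, and
consecutive pendants `4 * i, 4 * i + 4` are adjacent. In `Fin n` only the first `n / 4` triangles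
survive; the last `n % 4` vertices form a path hanging off the last pendant. -/
def pawStep (a b : ℕ) : Prop :=
  (b = a + 1 ∧ a % 4 ≠ 3) ∨ (b = a + 2 ∧ a % 4 = 1) ∨ (b = a + 4 ∧ a % 4 = 0)

def pawChain (n : ℕ) : SimpleGraph (Fin n) where
  Adj u v := pawStep u v ∨ pawStep v u
  symm := ⟨fun _ _ => Or.symm⟩
  loopless := ⟨fun _ => by unfold pawStep; omega⟩

theorem pawChain_connected {n : ℕ} (hn : 1 ≤ n) : (pawChain n).Connected := by
  refine connected_of_forall_exists_lt_adj ⟨0, hn⟩ fun v hv => ?_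
  have hv0 : v.val ≠ 0 := fun h => hv (Fin.ext h)
  obtain ⟨u, hu, hstep⟩ : ∃ u < v.val, pawStep u v := by
    unfold pawStep
    by_cases h4 : v.val % 4 = 0
    exacts [⟨v - 4, by omega, by omega⟩, ⟨v - 1, by omega, by omega⟩]
  exact ⟨⟨u, hu.trans v.2⟩, hu, Or.inl hstep⟩

theorem pawChain_not_iso_top (n : ℕ) : IsEmpty (pawChain n ≃g (⊤ : SimpleGraph (Fin 3))) := by
  refine ⟨fun e => ?_⟩
  obtain rfl : n = 3 := Fin.equiv_iff_eq.mp ⟨e.toEquiv⟩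
  have h02 : ¬ (pawChain 3).Adj 0 2 := by simp [pawChain, pawStep]
  exact h02 (e.map_adj_iff.mp ((top_adj _ _).mpr (e.injective.ne (by decide))))

theorem le_ncard_of_isCycleIsolating_pawChain {n : ℕ} {D : Set (Fin n)}
    (hD : IsCycleIsolating (pawChain n) D) : n / 4 ≤ D.ncard := by
  have hit : ∀ i < n / 4, ∃ d ∈ D, d.val / 4 = i := by
    intro i hi
    have near : ∀ t : Fin n, t.val / 4 = i → t.val % 4 ≠ 0 → t ∈ closedNbhd (pawChain n) D →
        ∃ d ∈ D, d.val / 4 = i := by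
      intro t hti ht0 ht
      obtain ⟨d, hd, rfl | hdt⟩ := mem_closedNbhd_iff.mp ht
      exacts [⟨d, hd, hti⟩, ⟨d, hd, by simp only [pawChain, pawStep] at hdt; omega⟩]
    rcases hD.exists_mem_closedNbhd_of_adj (x := ⟨4 * i + 1, by omega⟩)
      (y := ⟨4 * i + 2, by omega⟩) (z := ⟨4 * i + 3, by omega⟩) (by simp [pawChain, pawStep])
      (by simp [pawChain, pawStep]) (by simp [pawChain, pawStep]) with h | h | h <;>
      exact near _ (by simp; omega) (by simp) h
  calc n / 4 = (Set.Iio (n / 4)).ncard := (Set.ncard_Iio_nat _).symm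
    _ ≤ ((fun d : Fin n => d.val / 4) '' D).ncard :=
      Set.ncard_le_ncard hit (Set.toFinite _)
    _ ≤ D.ncard := Set.ncard_image_le (Set.toFinite D)

theorem exists_isCycleIsolating_pawChain (n : ℕ) :
    ∃ D, IsCycleIsolating (pawChain n) D ∧ D.ncard = n / 4 := by
  let hub : Fin (n / 4) → Fin n := fun i => ⟨4 * i + 1, by omega⟩
  have hub_inj : hub.Injective := fun i j h => Fin.ext (by simpa [hub] using h)
  refine ⟨Set.range hub, ?_, by simp [Set.ncard_range_of_injective hub_inj]⟩
  -- Everything below `4 * (n / 4)` is a hub or a neighbour of one; the rest induces a path.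
  have tail : ∀ v ∉ closedNbhd (pawChain n) (Set.range hub), 4 * (n / 4) ≤ v.val := by
    intro v hv
    by_contra! hlt
    refine hv (mem_closedNbhd_iff.mpr ⟨hub ⟨v / 4, by omega⟩, ⟨_, rfl⟩, ?_⟩)
    by_cases h1 : v.val % 4 = 1
    · exact Or.inl (Fin.ext (by simp [hub]; omega))
    · exact Or.inr (by simp [hub, pawChain, pawStep]; omega)
  refine (isAcyclic_hasse (α := Fin n)).induce _ |>.anti fun u v huv => ?_
  have hu := tail u u.2
  have hv := tail v v.2
  have huv : pawStep u.1 v.1 ∨ pawStep v.1 u.1 := huv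
  show (pathGraph n).Adj u v
  rw [pathGraph_adj]
  unfold pawStep at huv
  omega

/-- For every `n ≥ 1`, there exists a connected graph `G` on `n` vertices,
not isomorphic to `K₃`, such that every cycle isolating set of `G` has size at
least `⌊n/4⌋`, some cycle isolating set has size exactly `⌊n/4⌋`,
and hence `ι_c(G) = ⌊n/4⌋`. -/
theorem stmt2 (n : ℕ) (hn : 1 ≤ n) :
    ∃ G : SimpleGraph (Fin n), G.Connected ∧
      IsEmpty (G ≃g (⊤ : SimpleGraph (Fin 3))) ∧
      (∀ D : Set (Fin n), IsCycleIsolating G D → n / 4 ≤ D.ncard) ∧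
      (∃ D : Set (Fin n), IsCycleIsolating G D ∧ D.ncard = n / 4) ∧
      iotaC G = n / 4 := by
  obtain ⟨D, hD, hcard⟩ := exists_isCycleIsolating_pawChain n
  have hle : ∀ D, IsCycleIsolating (pawChain n) D → n / 4 ≤ D.ncard :=
    fun _ => le_ncard_of_isCycleIsolating_pawChain
  exact ⟨pawChain n, pawChain_connected hn, pawChain_not_iso_top n, hle, ⟨D, hD, hcard⟩,
    iotaC_eq_of_forall_le_ncard hle hD hcard⟩
end

section
/- Let F be a graph on k ≥ 1 vertices and let n ≥ k + 1. Then there exists a connected graph G on n vertices such that ι(G, F) = ⌊n/(k+1)⌋, where ι(G, F) is the size of a smallest {F}-isolating set of G. (The paper's witness is the graph B_{n,F} obtained by taking a path on b = n − k⌊n/(k+1)⌋ vertices, attaching extra pendant-like path vertices to its last vertex if b exceeds a = ⌊n/(k+1)⌋, together with a vertex-disjoint copies F₁, …, F_a of F, and joining the i-th vertex of the path to every vertex of F_i for each i ∈ [a].) -/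
/-!
Take a path `c_0, …, c_{a-1}` with `a = ⌊n/(k+1)⌋`, join `c_i` to every vertex of a copy `F_i`
of `F`, and hang the remaining `n mod (k+1)` vertices on `c_0`. The path vertices dominate this
graph, so they isolate `F`. Conversely, every neighbour of `F_i` lies in the block `{c_i} ∪ F_i`,
so a set `D` avoiding that block leaves `F_i` outside `N[D]`; hence an `F`-isolating set meets
each of the `a` disjoint blocks and has at least `a` elements.
-/

open SimpleGraph

/-- `G` contains a subgraph isomorphic to `F`, i.e. there is an injective
graph homomorphism from `F` to `G`. -/
def ContainsCopy {V W : Type*} (G : SimpleGraph V) (F : SimpleGraph W) : Prop :=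
  ∃ f : F →g G, Function.Injective f

/-- `D` is an `ℱ`-isolating set of `G` (for the family `𝓕 i, i : ι`):
`G − N[D]` contains no subgraph isomorphic to a member of the family. -/
def IsIsolating {V ι : Type*} {W : ι → Type*} (G : SimpleGraph V)
    (𝓕 : ∀ i, SimpleGraph (W i)) (D : Set V) : Prop :=
  ∀ i, ¬ ContainsCopy (G.induce (closedNbhd G D)ᶜ) (𝓕 i)

/-- `ι(G, ℱ)`: the size of a smallest `ℱ`-isolating set of `G`. -/
noncomputable def iotaFam {V ι : Type*} {W : ι → Type*} (G : SimpleGraph V)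
    (𝓕 : ∀ i, SimpleGraph (W i)) : ℕ :=
  sInf {k | ∃ D : Set V, IsIsolating G 𝓕 D ∧ D.ncard = k}

/-- `ι(G, F)`: the size of a smallest `{F}`-isolating set of `G`. -/
noncomputable def iotaF {V W : Type*} (G : SimpleGraph V) (F : SimpleGraph W) : ℕ :=
  iotaFam G (fun _ : Unit => F)

lemma containsCopy_iff_isContained {V W : Type*} {G : SimpleGraph V} {F : SimpleGraph W} :
    ContainsCopy G F ↔ F ⊑ G :=
  ⟨fun ⟨f, hf⟩ => ⟨⟨f, hf⟩⟩, fun ⟨f⟩ => ⟨f.toHom, f.injective⟩⟩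

lemma containsCopy_induce_of_forall_mem {V W : Type*} {G : SimpleGraph V} {F : SimpleGraph W}
    {S : Set V} (f : F →g G) (hf : Function.Injective f) (hS : ∀ w, f w ∈ S) :
    ContainsCopy (G.induce S) F :=
  ⟨⟨fun w => ⟨f w, hS w⟩, f.map_rel⟩, fun _ _ h => hf (congrArg Subtype.val h)⟩

section Isomorphism

variable {V V' ι : Type*} {X : ι → Type*} {G : SimpleGraph V} {G' : SimpleGraph V'}

lemma closedNbhd_image_iso (φ : G ≃g G') (D : Set V) :
    closedNbhd G' (φ '' D) = φ '' closedNbhd G D := by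
  simp only [closedNbhd, Set.image_union, Set.image_iUnion₂, Set.biUnion_image,
    Iso.image_neighborSet]

lemma isIsolating_image_iff (φ : G ≃g G') (𝓕 : ∀ i, SimpleGraph (X i)) (D : Set V) :
    IsIsolating G' 𝓕 (φ '' D) ↔ IsIsolating G 𝓕 D := by
  have hbij : Set.BijOn φ (closedNbhd G D)ᶜ (closedNbhd G' (φ '' D))ᶜ := by
    rw [closedNbhd_image_iso, ← Set.image_compl_eq φ.bijective]
    exact φ.injective.injOn.bijOn_image
  refine forall_congr' fun i => not_congr ?_
  simp only [containsCopy_iff_isContained]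
  exact (isContained_congr_right (φ.induce hbij)).symm

lemma iotaFam_congr (φ : G ≃g G') (𝓕 : ∀ i, SimpleGraph (X i)) :
    iotaFam G 𝓕 = iotaFam G' 𝓕 := by
  unfold iotaFam
  congr 1
  ext m
  constructor
  · rintro ⟨D, hD, rfl⟩
    exact ⟨φ '' D, (isIsolating_image_iff φ 𝓕 D).2 hD, Set.ncard_image_of_injective D φ.injective⟩
  · rintro ⟨D', hD', rfl⟩
    have himage : φ '' (φ ⁻¹' D') = D' := Set.image_preimage_eq D' φ.surjective
    refine ⟨φ ⁻¹' D', ?_, ?_⟩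
    · rwa [← isIsolating_image_iff φ, himage]
    · rw [← Set.ncard_image_of_injective _ φ.injective, himage]

end Isomorphism

section Domination

variable {V ι : Type*} {G : SimpleGraph V} {D : Set V}

lemma isIsolating_of_closedNbhd_eq_univ {X : ι → Type*} [∀ i, Nonempty (X i)]
    (𝓕 : ∀ i, SimpleGraph (X i)) (hD : closedNbhd G D = Set.univ) : IsIsolating G 𝓕 D := by
  rintro i ⟨f, -⟩
  exact (f (Classical.arbitrary _)).2 (Set.eq_univ_iff_forall.1 hD _)

lemma connected_of_closedNbhd_eq_univ (hD : closedNbhd G D = Set.univ) (hne : D.Nonempty)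
    (hreach : ∀ u ∈ D, ∀ v ∈ D, G.Reachable u v) :
    G.Connected := by
  have hnear : ∀ v, ∃ u ∈ D, G.Reachable u v := by
    intro v
    have hv : v ∈ closedNbhd G D := Set.eq_univ_iff_forall.1 hD v
    simp only [closedNbhd, Set.mem_union, Set.mem_iUnion, mem_neighborSet] at hv
    rcases hv with hv | ⟨u, hu, huv⟩
    · exact ⟨v, hv, .refl v⟩
    · exact ⟨u, hu, huv.reachable⟩
  obtain ⟨d, hd⟩ := hne
  refine (connected_iff _).2 ⟨fun v w => ?_, ⟨d⟩⟩
  obtain ⟨u, hu, huv⟩ := hnear v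
  obtain ⟨u', hu', hu'w⟩ := hnear w
  exact huv.symm.trans ((hreach u hu u' hu').trans hu'w)

end Domination

/-- `(i, none)` is the path vertex `c_i`, `(i, some w)` is the vertex `w` of `F_i`, and `Sum.inr`
marks the pendant vertices. -/
abbrev BVert (W : Type*) (a r : ℕ) : Type _ := (Fin a × Option W) ⊕ Fin r

section Construction

variable {W : Type*} (F : SimpleGraph W) (a r : ℕ)

def BAdj : BVert W a r → BVert W a r → Prop
  | .inl (i, none), .inl (j, none) => (pathGraph a).Adj i j
  | .inl (i, none), .inl (j, some _) => i = j
  | .inl (i, some _), .inl (j, none) => i = j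
  | .inl (i, some w), .inl (j, some w') => i = j ∧ F.Adj w w'
  | .inl (i, none), .inr _ => i.val = 0
  | .inr _, .inl (i, none) => i.val = 0
  | _, _ => False

def bGraph : SimpleGraph (BVert W a r) where
  Adj := BAdj F a r
  symm := by
    constructor
    rintro (⟨i, _ | w⟩ | x) (⟨j, _ | w'⟩ | y) h <;> simp only [BAdj] at h ⊢
    all_goals first | exact h.symm | exact ⟨h.1.symm, h.2.symm⟩ | exact h
  loopless := by
    constructor
    rintro (⟨i, _ | w⟩ | x) h <;> simp only [BAdj] at h
    · exact (pathGraph a).loopless.irrefl i h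
    · exact F.loopless.irrefl w h.2

def centres : Set (BVert W a r) := Set.range fun i => .inl (i, none)

def copyHom (i : Fin a) : F →g bGraph F a r where
  toFun w := .inl (i, some w)
  map_rel' h := ⟨rfl, h⟩

lemma copyHom_injective (i : Fin a) : Function.Injective (copyHom F a r i) :=
  fun _ _ h => Option.some_injective _ (Prod.ext_iff.1 (Sum.inl_injective h)).2

def pathHom : pathGraph a →g bGraph F a r where
  toFun i := .inl (i, none)
  map_rel' h := h

variable {F a r}

lemma closedNbhd_centres (ha : 0 < a) :
    closedNbhd (bGraph F a r) (centres a r) = Set.univ := by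
  refine Set.eq_univ_of_forall fun v => ?_
  simp only [closedNbhd, centres, Set.mem_union, Set.mem_iUnion, mem_neighborSet]
  rcases v with ⟨i, _ | w⟩ | x
  · exact .inl ⟨i, rfl⟩
  · exact .inr ⟨_, ⟨i, rfl⟩, rfl⟩
  · exact .inr ⟨_, ⟨⟨0, ha⟩, rfl⟩, rfl⟩

lemma bGraph_connected (ha : 0 < a) : (bGraph F a r).Connected := by
  refine connected_of_closedNbhd_eq_univ (closedNbhd_centres ha) ⟨_, ⟨0, ha⟩, rfl⟩ ?_
  rintro _ ⟨i, rfl⟩ _ ⟨j, rfl⟩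
  exact (pathGraph_preconnected a i j).map (pathHom F a r)

lemma ncard_centres : (centres (W := W) a r).ncard = a := by
  rw [centres, ← Set.image_univ, Set.ncard_image_of_injective _ (fun i j h => by simpa using h),
    Set.ncard_univ, Nat.card_fin]

lemma exists_eq_block_of_adj_copy {u : BVert W a r} {i : Fin a} {w : W}
    (h : (bGraph F a r).Adj u (.inl (i, some w))) : ∃ o, u = .inl (i, o) := by
  rcases u with ⟨j, _ | w'⟩ | x
  · exact ⟨none, by rw [show j = i from h]⟩
  · exact ⟨some w', by rw [show j = i from h.1]⟩
  · exact h.elim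

lemma exists_mem_block_of_isIsolating {D : Set (BVert W a r)}
    (hD : IsIsolating (bGraph F a r) (fun _ : Unit => F) D) (i : Fin a) :
    ∃ o, .inl (i, o) ∈ D := by
  by_contra! hi
  refine hD () (containsCopy_induce_of_forall_mem _ (copyHom_injective F a r i) fun w hw => ?_)
  simp only [closedNbhd, Set.mem_union, Set.mem_iUnion, mem_neighborSet] at hw
  rcases hw with hw | ⟨u, hu, hadj⟩
  · exact hi _ hw
  · obtain ⟨o, rfl⟩ := exists_eq_block_of_adj_copy hadj
    exact hi o hu

lemma le_ncard_of_isIsolating [Finite W] {D : Set (BVert W a r)}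
    (hD : IsIsolating (bGraph F a r) (fun _ : Unit => F) D) : a ≤ D.ncard := by
  choose o ho using exists_mem_block_of_isIsolating hD
  have hinj : Set.InjOn (fun i => (.inl (i, o i) : BVert W a r)) Set.univ :=
    fun _ _ _ _ h => (Prod.ext_iff.1 (Sum.inl_injective h)).1
  simpa using Set.ncard_le_ncard_of_injOn _ (fun i _ => ho i) hinj D.toFinite

lemma iotaF_bGraph [Finite W] [Nonempty W] (ha : 0 < a) : iotaF (bGraph F a r) F = a :=
  IsLeast.csInf_eq
    ⟨⟨centres a r, isIsolating_of_closedNbhd_eq_univ _ (closedNbhd_centres ha), ncard_centres⟩,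
      by rintro _ ⟨D, hD, rfl⟩; exact le_ncard_of_isIsolating hD⟩

lemma card_bVert [Fintype W] : Fintype.card (BVert W a r) = a * (Fintype.card W + 1) + r := by
  simp [Fintype.card_sum, Fintype.card_prod, Fintype.card_option]

end Construction

/-- Let `F` be a graph on `k ≥ 1` vertices and let `n ≥ k + 1`. Then there exists a
connected graph `G` on `n` vertices such that `ι(G, F) = ⌊n/(k+1)⌋`. -/
theorem stmt3 {W : Type*} [Fintype W] (F : SimpleGraph W) (k n : ℕ)
    (hk : 1 ≤ k) (hcard : Fintype.card W = k) (hn : k + 1 ≤ n) :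
    ∃ G : SimpleGraph (Fin n), G.Connected ∧ iotaF G F = n / (k + 1) := by
  have : Nonempty W := Fintype.card_pos_iff.1 (by omega)
  have ha : 0 < n / (k + 1) := Nat.div_pos hn (by omega)
  have hcardB : Fintype.card (BVert W (n / (k + 1)) (n % (k + 1))) = Fintype.card (Fin n) := by
    rw [card_bVert, hcard, Fintype.card_fin, mul_comm, Nat.div_add_mod]
  let φ := Iso.comap (Fintype.equivOfCardEq hcardB).symm (bGraph F _ _)
  exact ⟨_, φ.connected_iff.2 (bGraph_connected ha), (iotaFam_congr φ _).trans (iotaF_bGraph ha)⟩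
end

section
/- If G is a graph, ℱ is a set of graphs, X ⊆ V(G), and Y ⊆ N[X], then ι(G, ℱ) ≤ |X| + ι(G − Y, ℱ), where G − Y is the subgraph of G induced by V(G) \ Y. -/
open SimpleGraph

/-- If `G` is a graph, `ℱ` is a set of graphs, `X ⊆ V(G)`, and `Y ⊆ N[X]`, then
`ι(G, ℱ) ≤ |X| + ι(G − Y, ℱ)`, where `G − Y` is the subgraph of `G` induced by
`V(G) \ Y`. -/
theorem stmt7 {V ι : Type*} {W : ι → Type*} [Fintype V] (G : SimpleGraph V)
    (𝓕 : ∀ i, SimpleGraph (W i)) (X Y : Set V) (hY : Y ⊆ closedNbhd G X) :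
    iotaFam G 𝓕 ≤ X.ncard + iotaFam (G.induce Yᶜ) 𝓕 := by
  classical
  set S' : Set ℕ := {k | ∃ D : Set ↥(Yᶜ), IsIsolating (G.induce Yᶜ) 𝓕 D ∧ D.ncard = k} with hS'
  by_cases hne : S'.Nonempty
  · -- main case
    have hmemInf : sInf S' ∈ S' := Nat.sInf_mem hne
    obtain ⟨D', hD'iso, hD'card⟩ := hmemInf
    -- rename for clarity
    set D : Set V := X ∪ (Subtype.val '' D') with hD
    have hXD : closedNbhd G X ⊆ closedNbhd G D := by
      apply Set.union_subset_union
      · exact Set.subset_union_left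
      · intro v hv
        simp only [Set.mem_iUnion] at hv ⊢
        obtain ⟨u, hu, hadj⟩ := hv
        exact ⟨u, Or.inl hu, hadj⟩
    have hiso : IsIsolating G 𝓕 D := by
      intro i ⟨f, hf⟩
      apply hD'iso i
      -- build hom from G-side residual to (G.induce Yᶜ)-side residual
      have hmem : ∀ v : ↥(closedNbhd G D)ᶜ, (v : V) ∈ Yᶜ := by
        intro v
        intro hvY
        exact v.prop (hXD (hY hvY))
      have hmem2 : ∀ v : ↥(closedNbhd G D)ᶜ,
          (⟨(v : V), hmem v⟩ : ↥(Yᶜ)) ∈ (closedNbhd (G.induce Yᶜ) D')ᶜ := by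
        intro v hvin
        apply v.prop
        rcases hvin with h | h
        · exact Or.inl (Or.inr ⟨⟨(v : V), hmem v⟩, h, rfl⟩)
        · simp only [Set.mem_iUnion] at h
          obtain ⟨u, hu, hadj⟩ := h
          refine Or.inr ?_
          simp only [Set.mem_iUnion]
          exact ⟨(u : V), Or.inr ⟨u, hu, rfl⟩, hadj⟩
      let g : (G.induce (closedNbhd G D)ᶜ) →g
          ((G.induce Yᶜ).induce (closedNbhd (G.induce Yᶜ) D')ᶜ) :=
        { toFun := fun v => ⟨⟨(v : V), hmem v⟩, hmem2 v⟩
          map_rel' := fun h => h }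
      refine ⟨g.comp f, ?_⟩
      intro a b hab
      apply hf
      have : ((f a : V)) = ((f b : V)) := congrArg (fun x => ((x : ↥(Yᶜ)) : V))
        (congrArg Subtype.val hab)
      exact Subtype.ext this
    have h1 : iotaFam G 𝓕 ≤ D.ncard := Nat.sInf_le ⟨D, hiso, rfl⟩
    have h2 : iotaFam (G.induce Yᶜ) 𝓕 = D'.ncard := by
      exact hD'card.symm
    have h3 : D.ncard ≤ X.ncard + D'.ncard := by
      calc D.ncard ≤ X.ncard + (Subtype.val '' D').ncard := Set.ncard_union_le _ _
        _ = X.ncard + D'.ncard := by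
            rw [Set.ncard_image_of_injective _ Subtype.val_injective]
    rw [h2]
    exact h1.trans h3
  · -- degenerate case : no isolating set on the induced graph
    have hempty : S' = ∅ := Set.not_nonempty_iff_eq_empty.mp hne
    have h0 : iotaFam (G.induce Yᶜ) 𝓕 = 0 := by
      show sInf S' = 0
      rw [hempty]; exact Nat.sInf_empty
    have hGempty : {k | ∃ D : Set V, IsIsolating G 𝓕 D ∧ D.ncard = k} = ∅ := by
      rw [Set.eq_empty_iff_forall_notMem]
      rintro k ⟨D, hDiso, -⟩
      have huniv : ¬ IsIsolating (G.induce Yᶜ) 𝓕 Set.univ := by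
        intro h
        exact hne ⟨(Set.univ : Set ↥(Yᶜ)).ncard, Set.univ, h, rfl⟩
      rw [IsIsolating] at huniv
      push_neg at huniv
      obtain ⟨i, f, -⟩ := huniv
      have hfalse : ∀ w : W i, False := by
        intro w
        exact (f w).prop (Or.inl (Set.mem_univ _))
      refine hDiso i ⟨⟨fun w => (hfalse w).elim, fun {a b} _ => (hfalse a).elim⟩,
        fun a => (hfalse a).elim⟩
    have hG0 : iotaFam G 𝓕 = 0 := by
      show sInf _ = 0
      rw [hGempty]; exact Nat.sInf_empty
    simp [hG0]
end

section
/- If G is a graph, ℱ is a set of graphs, X ⊆ V(G), Y ⊆ N[X], and D is an ℱ-isolating set of the graph G − Y, then D ∪ X is an ℱ-isolating set of G. -/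
open SimpleGraph

/-- If `G` is a graph, `ℱ` is a set of graphs, `X ⊆ V(G)`, `Y ⊆ N[X]`, and `D` is
an `ℱ`-isolating set of the graph `G − Y`, then `D ∪ X` is an `ℱ`-isolating set
of `G`. -/
theorem stmt8 {V ι : Type*} {W : ι → Type*} (G : SimpleGraph V)
    (𝓕 : ∀ i, SimpleGraph (W i)) (X Y : Set V) (hY : Y ⊆ closedNbhd G X)
    (D : Set ↑(Yᶜ)) (hD : IsIsolating (G.induce Yᶜ) 𝓕 D) :
    IsIsolating G 𝓕 ((Subtype.val '' D) ∪ X) := by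
  rintro i ⟨f, hf⟩
  apply hD i
  have hmem : ∀ a, (↑(f a) : V) ∉ closedNbhd G ((Subtype.val '' D) ∪ X) := fun a => (f a).2
  have hnY : ∀ a, (↑(f a) : V) ∉ Y := by
    intro a haY
    apply hmem a
    rcases hY haY with h | h
    · exact Or.inl (Or.inr h)
    · obtain ⟨u, hu, hadj⟩ := Set.mem_iUnion₂.mp h
      exact Or.inr (Set.mem_biUnion (Or.inr hu) hadj)
  have hT : ∀ a, (⟨↑(f a), hnY a⟩ : ↑(Yᶜ)) ∈ (closedNbhd (G.induce Yᶜ) D)ᶜ := by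
    intro a h
    rcases h with h | h
    · exact hmem a (Or.inl (Or.inl ⟨_, h, rfl⟩))
    · obtain ⟨u, hu, hadj⟩ := Set.mem_iUnion₂.mp h
      exact hmem a (Or.inr (Set.mem_biUnion (Or.inl ⟨u, hu, rfl⟩) hadj))
  refine ⟨⟨fun a => ⟨⟨↑(f a), hnY a⟩, hT a⟩, ?_⟩, ?_⟩
  · intro a b hab
    exact f.map_adj hab
  · intro a b hab
    apply hf
    ext
    exact congrArg (fun x => (x : ↑(Yᶜ)).val) (congrArg Subtype.val hab)
end
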